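/- arXiv:0807.4247 — 2 statements merged into one kernel-verified Lean document; each statement's English description precedes it below -/
import Mathlib

section
/- Let 𝒞 be a Z2Z4-additive code and C = Φ(𝒞) the corresponding Z2Z4-linear code. Then C is a Z2-linear subspace of Z2^(α+2β) if and only if 2(u*v) ∈ 𝒞 for all u, v ∈ 𝒞. -/
/-- The ambient group `Z2^α × Z4^β`, with componentwise ring structure
(so `u * v` is the componentwise product). -/
abbrev Amb (α β : ℕ) := (Fin α → ZMod 2) × (Fin β → ZMod 4)

/-- The binary space `Z2^α × (Z2²)^β ≅ Z2^(α+2β)`. -/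
abbrev Bin (α β : ℕ) := (Fin α → ZMod 2) × (Fin β → ZMod 2 × ZMod 2)

/-- The Gray map `φ : Z4 → Z2²` with `φ(0)=(0,0), φ(1)=(0,1), φ(2)=(1,1), φ(3)=(1,0)`. -/
def grayPair (y : ZMod 4) : ZMod 2 × ZMod 2 :=
  match y.val with
  | 0 => (0, 0)
  | 1 => (0, 1)
  | 2 => (1, 1)
  | _ => (1, 0)

/-- The extended Gray map `Φ : Z2^α × Z4^β → Z2^(α+2β)`. -/
def Phi {α β : ℕ} (u : Amb α β) : Bin α β :=
  (u.1, fun i => grayPair (u.2 i))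

/-- The kernel `K(C) = {x | x + C = C}` of a binary code. -/
def kernelK {α β : ℕ} (C : Set (Bin α β)) : Set (Bin α β) :=
  {x | (fun y => x + y) '' C = C}

/-- The rank of a binary code: the `Z2`-dimension of its linear span. -/
noncomputable def rankOf {α β : ℕ} (C : Set (Bin α β)) : ℕ :=
  Module.finrank (ZMod 2) (Submodule.span (ZMod 2) C)

/-- The dimension of the kernel of a binary code. -/
noncomputable def kerDim {α β : ℕ} (C : Set (Bin α β)) : ℕ :=
  Module.finrank (ZMod 2) (Submodule.span (ZMod 2) (kernelK C))

/-- A `Z2Z4`-additive code `C ⊆ Z2^α × Z4^β` is of type `(α,β;γ,δ;κ)`: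
`|C| = 2^(γ+2δ)`, the number of elements `x` with `2x = 0` is `2^(γ+δ)`, and `κ` is the
`Z2`-dimension of the projection onto the first `α` coordinates of `{x ∈ C | 2x = 0}`. -/
def IsTypeOf (α β γ δ κ : ℕ) (C : AddSubgroup (Amb α β)) : Prop :=
  Nat.card C = 2 ^ (γ + 2 * δ) ∧
  Nat.card {x : Amb α β | x ∈ C ∧ 2 • x = 0} = 2 ^ (γ + δ) ∧
  Module.finrank (ZMod 2)
    (Submodule.span (ZMod 2) (Prod.fst '' {x : Amb α β | x ∈ C ∧ 2 • x = 0})) = κ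

/-!
The Gray map satisfies `Φ u + Φ v = Φ (u + v + 2 (u * v))`, and it is injective. Hence for
`u, v ∈ 𝒞` the sum `Φ u + Φ v` lies in `Φ(𝒞)` exactly when `u + v + 2 (u * v) ∈ 𝒞`, i.e. when
`2 (u * v) ∈ 𝒞`. Over `Z2` a set is a subspace as soon as it contains `0` and is closed under
addition, and `Φ 0 = 0`.
-/

theorem Submodule.exists_coe_eq_iff_of_zmod_two {M : Type*} [AddCommGroup M]
    [Module (ZMod 2) M] (S : Set M) :
    (∃ W : Submodule (ZMod 2) M, (W : Set M) = S) ↔ 0 ∈ S ∧ ∀ a ∈ S, ∀ b ∈ S, a + b ∈ S := by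
  constructor
  · rintro ⟨W, rfl⟩
    exact ⟨W.zero_mem, fun a ha b hb => W.add_mem ha hb⟩
  · rintro ⟨hzero, hadd⟩
    refine ⟨{ carrier := S
              zero_mem' := hzero
              add_mem' := fun ha hb => hadd _ ha _ hb
              smul_mem' := fun c a ha => ?_ }, rfl⟩
    obtain rfl | rfl : c = 0 ∨ c = 1 := by revert c; decide
    · rw [zero_smul]; exact hzero
    · rw [one_smul]; exact ha

theorem grayPair_injective : Function.Injective grayPair := by decide

theorem grayPair_add (x y : ZMod 4) :
    grayPair x + grayPair y = grayPair (x + y + 2 * (x * y)) := by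
  revert x y; decide

theorem Phi_injective {α β : ℕ} : Function.Injective (Phi (α := α) (β := β)) := by
  intro u v h
  simp only [Phi, Prod.mk.injEq] at h
  exact Prod.ext h.1 (funext fun i => grayPair_injective (congrFun h.2 i))

theorem Phi_zero {α β : ℕ} : Phi (0 : Amb α β) = 0 :=
  Prod.ext rfl (funext fun _ => rfl)

theorem Phi_add {α β : ℕ} (u v : Amb α β) :
    Phi u + Phi v = Phi (u + v + 2 * (u * v)) := by
  refine Prod.ext ?_ (funext fun i => grayPair_add (u.2 i) (v.2 i))
  show u.1 + v.1 = u.1 + v.1 + 2 * (u.1 * v.1)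
  funext i
  simp [CharTwo.two_eq_zero]

theorem Phi_add_mem_image_iff {α β : ℕ} {C : AddSubgroup (Amb α β)} {u v : Amb α β}
    (hu : u ∈ C) (hv : v ∈ C) :
    Phi u + Phi v ∈ Phi '' (C : Set (Amb α β)) ↔ 2 * (u * v) ∈ C := by
  rw [Phi_add, Phi_injective.mem_set_image, SetLike.mem_coe]
  exact C.add_mem_cancel_left (C.add_mem hu hv)

/-- `Φ(𝒞)` is a `Z2`-linear subspace iff `2(u*v) ∈ 𝒞` for all `u, v ∈ 𝒞`. -/
theorem gray_image_linear_iff (α β : ℕ) (C : AddSubgroup (Amb α β)) :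
    (∃ W : Submodule (ZMod 2) (Bin α β), (W : Set (Bin α β)) = Phi '' (C : Set (Amb α β))) ↔
      ∀ u ∈ C, ∀ v ∈ C, 2 * (u * v) ∈ C := by
  have hzero : (0 : Bin α β) ∈ Phi '' (C : Set (Amb α β)) := ⟨0, C.zero_mem, Phi_zero⟩
  simp only [Submodule.exists_coe_eq_iff_of_zmod_two, hzero, true_and, Set.forall_mem_image]
  exact forall₂_congr fun u hu => forall₂_congr fun v hv => Phi_add_mem_image_iff hu hv
end

section
/- Let α, β, γ, δ, κ be integers satisfying α, β, γ, δ, κ ≥ 0, α+β > 0, 0 < δ+γ ≤ β+κ, and κ ≤ min(α, γ). Then for every integer r with γ+2δ ≤ r ≤ min(β+δ+κ, γ+2δ+δ(δ−1)/2), there exists a Z2Z4-additive code 𝒞 of type (α,β;γ,δ;κ) such that rank(Φ(𝒞)) = r. -/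
namespace Z2Z4

variable {α β : ℕ}

theorem grayPair_add_grayPair :
    ∀ a b : ZMod 4, grayPair a + grayPair b = grayPair (a + b + 2 • (a * b)) := by
  decide

theorem grayPair_injective : Function.Injective grayPair := by
  decide

theorem Phi_zero : Phi (0 : Amb α β) = 0 :=
  Prod.ext rfl (funext fun _ => rfl)

theorem two_nsmul_two_nsmul (x : Amb α β) : 2 • 2 • x = 0 := by
  ext i
  · exact (by decide : ∀ y : ZMod 2, 2 • 2 • y = 0) _
  · exact (by decide : ∀ y : ZMod 4, 2 • 2 • y = 0) _

theorem Phi_add_Phi (x y : Amb α β) : Phi x + Phi y = Phi (x + y + 2 • (x * y)) :=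
  Prod.ext (funext fun _ => (by decide : ∀ a b : ZMod 2, a + b = a + b + 2 • (a * b)) _ _)
    (funext fun _ => grayPair_add_grayPair _ _)

theorem Phi_injective : Function.Injective (Phi : Amb α β → Bin α β) := by
  rintro ⟨x₁, x₂⟩ ⟨y₁, y₂⟩ h
  simp only [Phi, Prod.mk.injEq, funext_iff] at h
  exact Prod.ext (funext h.1) (funext fun i => grayPair_injective (h.2 i))

theorem Phi_add_of_two_nsmul_eq_zero (x : Amb α β) {h : Amb α β} (hh : 2 • h = 0) :
    Phi (x + h) = Phi x + Phi h := by
  rw [Phi_add_Phi, ← mul_smul_comm, hh, mul_zero, add_zero]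

theorem Phi_two_nsmul_mul (x y : Amb α β) :
    Phi (2 • (x * y)) = Phi x + Phi y - Phi (x + y) := by
  rw [Phi_add_Phi, Phi_add_of_two_nsmul_eq_zero _ (two_nsmul_two_nsmul _), add_sub_cancel_left]

def grayHull (C : AddSubgroup (Amb α β)) : AddSubgroup (Amb α β) :=
  C ⊔ AddSubgroup.closure (Set.image2 (fun x y => 2 • (x * y)) C C)

variable {C : AddSubgroup (Amb α β)}

theorem two_nsmul_eq_zero_of_mem_closure {z : Amb α β}
    (hz : z ∈ AddSubgroup.closure (Set.image2 (fun x y => 2 • (x * y)) C C)) : 2 • z = 0 := by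
  induction hz using AddSubgroup.closure_induction with
  | mem z hz =>
    obtain ⟨x, -, y, -, rfl⟩ := hz
    exact two_nsmul_two_nsmul _
  | zero => exact smul_zero _
  | add _ _ _ _ h₁ h₂ => rw [smul_add, h₁, h₂, add_zero]
  | neg _ _ h => rw [smul_neg, h, neg_zero]

theorem two_nsmul_mul_mem_grayHull {x y : Amb α β} (hx : x ∈ grayHull C)
    (hy : y ∈ grayHull C) : 2 • (x * y) ∈ grayHull C := by
  obtain ⟨c, hc, h, hh, rfl⟩ := AddSubgroup.mem_sup.mp hx
  obtain ⟨c', hc', h', hh', rfl⟩ := AddSubgroup.mem_sup.mp hy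
  have expand : 2 • ((c + h) * (c' + h')) =
      2 • (c * c') + (c' + h') * (2 • h) + c * (2 • h') := by
    ring
  rw [expand, two_nsmul_eq_zero_of_mem_closure hh, two_nsmul_eq_zero_of_mem_closure hh',
    mul_zero, mul_zero, add_zero, add_zero]
  exact AddSubgroup.mem_sup_right (AddSubgroup.subset_closure (Set.mem_image2_of_mem hc hc'))

variable (C) in
def grayHullSubmodule : Submodule (ZMod 2) (Bin α β) where
  carrier := Phi '' grayHull C
  add_mem' := by
    rintro _ _ ⟨x, hx, rfl⟩ ⟨y, hy, rfl⟩
    exact ⟨_, add_mem (add_mem hx hy) (two_nsmul_mul_mem_grayHull hx hy), (Phi_add_Phi x y).symm⟩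
  zero_mem' := ⟨0, zero_mem _, Phi_zero⟩
  smul_mem' a v hv := by
    rcases (by decide : ∀ a : ZMod 2, a = 0 ∨ a = 1) a with rfl | rfl
    · exact ⟨0, zero_mem _, by rw [Phi_zero, zero_smul]⟩
    · rwa [one_smul]

theorem span_Phi_image : Submodule.span (ZMod 2) (Phi '' C) = grayHullSubmodule C := by
  refine le_antisymm (Submodule.span_le.mpr (Set.image_mono (le_sup_left : C ≤ grayHull C))) ?_
  rintro _ ⟨x, hx, rfl⟩
  obtain ⟨c, hc, h, hh, rfl⟩ := AddSubgroup.mem_sup.mp hx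
  rw [Phi_add_of_two_nsmul_eq_zero c (two_nsmul_eq_zero_of_mem_closure hh)]
  refine add_mem (Submodule.subset_span ⟨c, hc, rfl⟩) ?_
  clear hx
  induction hh using AddSubgroup.closure_induction with
  | mem z hz =>
    obtain ⟨x, hx, y, hy, rfl⟩ := hz
    rw [Phi_two_nsmul_mul]
    exact sub_mem (add_mem (Submodule.subset_span ⟨x, hx, rfl⟩)
      (Submodule.subset_span ⟨y, hy, rfl⟩)) (Submodule.subset_span ⟨x + y, add_mem hx hy, rfl⟩)
  | zero => rw [Phi_zero]; exact zero_mem _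
  | add h₁ h₂ _ hh₂ ih₁ ih₂ =>
    rw [Phi_add_of_two_nsmul_eq_zero h₁ (two_nsmul_eq_zero_of_mem_closure hh₂)]
    exact add_mem ih₁ ih₂
  | neg h hh ih =>
    rwa [neg_eq_of_add_eq_zero_right
      ((two_nsmul h).symm.trans (two_nsmul_eq_zero_of_mem_closure hh))]

variable (C) in
theorem two_pow_rankOf_Phi_image :
    2 ^ rankOf (Phi '' (C : Set (Amb α β))) = Nat.card (grayHull C) := by
  classical
  have := Module.card_eq_pow_finrank (K := ZMod 2) (V := grayHullSubmodule C)
  rw [ZMod.card, ← Nat.card_eq_fintype_card] at this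
  rw [rankOf, span_Phi_image, ← this]
  exact Nat.card_image_of_injective Phi_injective _

def twice : ZMod 2 →+ ZMod 4 :=
  AddMonoidHom.mk' (fun b => 2 * (b.val : ZMod 4)) (by decide)

theorem twice_injective : Function.Injective twice := by decide

theorem two_nsmul_eq_twice_cast : ∀ x : ZMod 4, 2 • x = twice (ZMod.cast x) := by
  decide

theorem exists_twice_eq_of_two_nsmul_eq_zero : ∀ x : ZMod 4, 2 • x = 0 → ∃ b, twice b = x := by
  decide

theorem two_nsmul_twice : ∀ b : ZMod 2, 2 • twice b = 0 := by
  decide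

section ZeroPad

variable {K ι : Type*} (eK : K ↪ Fin α) (eι : ι ↪ Fin β)

noncomputable def zeroPad : (K → ZMod 2) × (ι → ZMod 4) →ₙ+* Amb α β where
  toFun x := (Function.extend eK x.1 0, Function.extend eι x.2 0)
  map_mul' x y := Prod.ext (by simpa using Function.extend_mul eK x.1 y.1 0 0)
    (by simpa using Function.extend_mul eι x.2 y.2 0 0)
  map_zero' := Prod.ext (Function.extend_zero eK) (Function.extend_zero eι)
  map_add' x y := Prod.ext (by simpa using Function.extend_add eK x.1 y.1 0 0)
    (by simpa using Function.extend_add eι x.2 y.2 0 0)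

theorem zeroPad_injective : Function.Injective (zeroPad eK eι) := fun _ _ h =>
  Prod.ext (Function.extend_injective eK.injective 0 (congrArg Prod.fst h))
    (Function.extend_injective eι.injective 0 (congrArg Prod.snd h))

end ZeroPad

section Construction

variable {K B Q : Type*} (s : Finset (Q × Q))

/- The coordinate `t ∈ s` carries `v_{t.1} + v_{t.2}`; the term `2 d` vanishes on the code and
produces the extra vectors `2 (vᵢ * vⱼ)` of its Gray span. -/
def quatPart (c : Q → ZMod 4) (b : B → ZMod 2) (d : s → ZMod 2) : Q ⊕ B ⊕ s → ZMod 4 :=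
  Sum.elim c (Sum.elim (twice ∘ b) fun t => c t.1.1 + c t.1.2 + twice (d t))

def word :
    ((K → ZMod 2) × (B → ZMod 2) × (Q → ZMod 4)) × (s → ZMod 2) →+
      (K → ZMod 2) × (Q ⊕ B ⊕ s → ZMod 4) where
  toFun z := (z.1.1, quatPart s z.1.2.2 z.1.2.1 z.2)
  map_zero' := Prod.ext rfl (funext fun k => by rcases k with i | l | t <;> simp [quatPart])
  map_add' z w := Prod.ext rfl (funext fun k => by
    rcases k with i | l | t
    · rfl
    · exact map_add twice _ _
    · simp only [quatPart, Sum.elim_inr, Prod.fst_add, Prod.snd_add, Pi.add_apply, map_add]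
      abel)

theorem word_injective : Function.Injective (word (K := K) (B := B) s) := by
  refine (injective_iff_map_eq_zero _).mpr ?_
  rintro ⟨⟨a, b, c⟩, d⟩ h
  simp only [word, AddMonoidHom.coe_mk, ZeroHom.coe_mk, Prod.mk_eq_zero, funext_iff] at h
  obtain ⟨ha, hq⟩ := h
  have hc : c = 0 := funext fun i => hq (.inl i)
  have hb : b = 0 := funext fun l =>
    twice_injective (by simpa [quatPart] using hq (.inr (.inl l)))
  have hd : d = 0 := funext fun t =>
    twice_injective (by simpa [quatPart, hc] using hq (.inr (.inr t)))
  simp [funext ha, hb, hc, hd]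

def cross (c c' : Q → ZMod 4) (t : s) : ZMod 2 :=
  ZMod.cast (c t.1.1 * c' t.1.2 + c t.1.2 * c' t.1.1)

theorem two_nsmul_word_mul_word (a a' : K → ZMod 2) (b b' : B → ZMod 2) (c c' : Q → ZMod 4) :
    2 • (word s ((a, b, c), 0) * word s ((a', b', c'), 0)) =
      word s ((0, 0, 2 • (c * c')), cross s c c') := by
  refine Prod.ext (funext fun i => ?_) (funext fun k => ?_)
  · exact CharTwo.two_nsmul _
  · rcases k with i | l | t
    · rfl
    · show 2 • (twice (b l) * twice (b' l)) = twice 0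
      rw [← mul_smul_comm, two_nsmul_twice, mul_zero, map_zero]
    · show 2 • ((c t.1.1 + c t.1.2 + twice 0) * (c' t.1.1 + c' t.1.2 + twice 0)) =
        2 • (c t.1.1 * c' t.1.1) + 2 • (c t.1.2 * c' t.1.2) + twice (cross s c c' t)
      rw [cross, ← two_nsmul_eq_twice_cast, map_zero]
      ring

theorem single_mul_single_of_ne {R : Type*} [MulZeroClass R] [DecidableEq Q] {i j : Q}
    (hij : i ≠ j) (x y : R) : (Pi.single i x * Pi.single j y : Q → R) = 0 := by
  ext k
  by_cases hk : k = i
  · subst hk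
    simp [hij]
  · simp [hk]

variable [LinearOrder Q]

theorem cross_single_single (hs : ∀ q ∈ s, q.1 < q.2) (t : s) :
    cross s (Pi.single t.1.1 1) (Pi.single t.1.2 1) = Pi.single t 1 := by
  obtain ⟨⟨i, j⟩, hij⟩ := t
  ext ⟨⟨k, l⟩, hkl⟩
  have hij' : i < j := hs _ hij
  have hkl' : k < l := hs _ hkl
  by_cases h : k = i ∧ l = j
  · obtain ⟨rfl, rfl⟩ := h
    simp [cross, hkl'.ne, hkl'.ne']
  · simp only [cross, Pi.single_apply, Subtype.mk.injEq, Prod.mk.injEq, h, if_false]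
    split_ifs <;> simp_all [lt_asymm hij']

end Construction

section Code

variable {K B Q : Type*} (s : Finset (Q × Q)) (eK : K ↪ Fin α) (eι : Q ⊕ B ⊕ s ↪ Fin β)

noncomputable def encode :
    ((K → ZMod 2) × (B → ZMod 2) × (Q → ZMod 4)) × (s → ZMod 2) →+ Amb α β :=
  (zeroPad eK eι).toAddMonoidHom.comp (word s)

noncomputable def code : AddSubgroup (Amb α β) :=
  ((encode s eK eι).comp (AddMonoidHom.inl _ _)).range

theorem encode_injective : Function.Injective (encode s eK eι) :=
  (zeroPad_injective eK eι).comp (word_injective s)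

theorem two_nsmul_encode_mul_encode (z w : (K → ZMod 2) × (B → ZMod 2) × (Q → ZMod 4)) :
    2 • (encode s eK eι (z, 0) * encode s eK eι (w, 0)) =
      encode s eK eι ((0, 0, 2 • (z.2.2 * w.2.2)), cross s z.2.2 w.2.2) := by
  obtain ⟨a, b, c⟩ := z
  obtain ⟨a', b', c'⟩ := w
  rw [encode, AddMonoidHom.comp_apply, AddMonoidHom.comp_apply, AddMonoidHom.comp_apply,
    ← two_nsmul_word_mul_word s a a' b b' c c']
  simp only [NonUnitalRingHom.coe_toAddMonoidHom, map_nsmul, map_mul]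

theorem encode_single_eq [LinearOrder Q] (hs : ∀ q ∈ s, q.1 < q.2) (t : s) :
    encode s eK eι (0, Pi.single t 1) =
      2 • (encode s eK eι ((0, 0, Pi.single t.1.1 1), 0) *
        encode s eK eι ((0, 0, Pi.single t.1.2 1), 0)) := by
  rw [two_nsmul_encode_mul_encode, single_mul_single_of_ne (hs _ t.2).ne, smul_zero,
    cross_single_single s hs]
  rfl

theorem grayHull_code [LinearOrder Q] (hs : ∀ q ∈ s, q.1 < q.2) :
    grayHull (code s eK eι) = (encode s eK eι).range := by
  apply le_antisymm
  · refine sup_le (fun _ ⟨z, hz⟩ => ⟨(z, 0), hz⟩) ((AddSubgroup.closure_le _).mpr ?_)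
    rintro _ ⟨_, ⟨z, rfl⟩, _, ⟨w, rfl⟩, rfl⟩
    exact ⟨_, (two_nsmul_encode_mul_encode s eK eι z w).symm⟩
  · rintro _ ⟨⟨z, d⟩, rfl⟩
    rw [show (z, d) = (z, 0) + (0, d) by simp, map_add]
    refine add_mem (AddSubgroup.mem_sup_left ⟨z, rfl⟩) ?_
    change (encode s eK eι).comp (AddMonoidHom.inr _ _) d ∈ _
    induction d using Pi.single_induction with
    | zero => rw [map_zero]; exact zero_mem _
    | add d d' hd hd' => rw [map_add]; exact add_mem hd hd'
    | single t m =>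
      rcases (by decide : ∀ m : ZMod 2, m = 0 ∨ m = 1) m with rfl | rfl
      · rw [Pi.single_zero, map_zero]; exact zero_mem _
      · rw [AddMonoidHom.comp_apply, AddMonoidHom.inr_apply, encode_single_eq s eK eι hs t]
        exact AddSubgroup.mem_sup_right (AddSubgroup.subset_closure
          (Set.mem_image2_of_mem ⟨_, rfl⟩ ⟨_, rfl⟩))

theorem two_torsion_code :
    {x | x ∈ code s eK eι ∧ 2 • x = 0} =
      Set.range fun z : (K → ZMod 2) × (B → ZMod 2) × (Q → ZMod 2) =>
        encode s eK eι ((z.1, z.2.1, twice ∘ z.2.2), 0) := by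
  ext x
  constructor
  · rintro ⟨⟨⟨a, b, c⟩, rfl⟩, hx⟩
    have hc : 2 • c = 0 := by
      rw [AddMonoidHom.comp_apply, ← map_nsmul, ← map_zero (encode s eK eι)] at hx
      exact congrArg (fun z => z.1.2.2) (encode_injective s eK eι hx)
    choose u hu using fun i => exists_twice_eq_of_two_nsmul_eq_zero (c i) (congr_fun hc i)
    exact ⟨(a, b, u), congrArg (fun c => encode s eK eι ((a, b, c), 0)) (funext hu)⟩
  · rintro ⟨⟨a, b, u⟩, rfl⟩
    refine ⟨⟨_, rfl⟩, ?_⟩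
    rw [← map_nsmul, ← map_zero (encode s eK eι)]
    congr 1
    refine Prod.ext (Prod.ext ?_ (Prod.ext ?_ ?_)) (smul_zero 2) <;> funext i
    exacts [CharTwo.two_nsmul (a i), CharTwo.two_nsmul (b i), two_nsmul_twice (u i)]

variable [Fintype K]

theorem finrank_span_fst_two_torsion_code :
    Module.finrank (ZMod 2)
      (Submodule.span (ZMod 2) (Prod.fst '' {x | x ∈ code s eK eι ∧ 2 • x = 0})) =
      Fintype.card K := by
  have hfst : Prod.fst '' {x | x ∈ code s eK eι ∧ 2 • x = 0} =
      LinearMap.range (Function.ExtendByZero.linearMap (ZMod 2) eK) := by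
    rw [two_torsion_code]
    ext y
    constructor
    · rintro ⟨_, ⟨z, rfl⟩, rfl⟩
      exact ⟨z.1, rfl⟩
    · rintro ⟨a, rfl⟩
      exact ⟨_, ⟨(a, 0, 0), rfl⟩, rfl⟩
  rw [hfst, Submodule.span_eq, LinearMap.finrank_range_of_inj
    (Function.extend_injective eK.injective 0), Module.finrank_fintype_fun_eq_card]

variable [Fintype B] [Fintype Q]

theorem card_code :
    Nat.card (code s eK eι) = 2 ^ (Fintype.card K + Fintype.card B + 2 * Fintype.card Q) := by
  rw [code, ← Nat.card_congr (AddMonoidHom.ofInjective (f := (encode s eK eι).comp (.inl _ _))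
    ((encode_injective s eK eι).comp (Prod.mk_left_injective 0))).toEquiv]
  simp [Nat.card_fun, pow_add, pow_mul, mul_assoc]

theorem card_two_torsion_code :
    Nat.card {x | x ∈ code s eK eι ∧ 2 • x = 0} =
      2 ^ (Fintype.card K + Fintype.card B + Fintype.card Q) := by
  rw [two_torsion_code, Nat.card_range_of_injective]
  · simp [Nat.card_fun, pow_add, mul_assoc]
  · rintro ⟨a, b, u⟩ ⟨a', b', u'⟩ h
    have := encode_injective s eK eι h
    simp only [Prod.mk.injEq, and_true] at this
    obtain ⟨rfl, rfl, hu⟩ := this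
    rw [twice_injective.comp_left hu]

theorem two_pow_rankOf_code [LinearOrder Q] (hs : ∀ q ∈ s, q.1 < q.2) :
    2 ^ rankOf (Phi '' (code s eK eι : Set (Amb α β))) =
      2 ^ (Fintype.card K + Fintype.card B + 2 * Fintype.card Q + s.card) := by
  rw [two_pow_rankOf_Phi_image, grayHull_code s eK eι hs,
    ← Nat.card_congr (AddMonoidHom.ofInjective (encode_injective s eK eι)).toEquiv]
  simp [Nat.card_fun, pow_add, pow_mul, mul_assoc]

end Code

end Z2Z4

open Z2Z4

theorem exists_code_with_rank_general (α β γ δ κ r : ℕ)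
    (h4 : κ ≤ min α γ)
    (hr1 : γ + 2 * δ ≤ r)
    (hr2 : r ≤ min (β + δ + κ) (γ + 2 * δ + δ * (δ - 1) / 2)) :
    ∃ C : AddSubgroup (Amb α β), IsTypeOf α β γ δ κ C ∧
      rankOf (Phi '' (C : Set (Amb α β))) = r := by
  obtain ⟨hκα, hκγ⟩ := le_min_iff.mp h4
  obtain ⟨hrβ, hrδ⟩ := le_min_iff.mp hr2
  obtain ⟨s, hs, hs_card⟩ := Finset.exists_subset_card_eq (s := {q : Fin δ × Fin δ | q.1 < q.2})
    (n := r - (γ + 2 * δ))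
    (by rw [Fintype.card_product_filter_lt, Fintype.card_fin, Nat.choose_two_right]; omega)
  have hs_lt : ∀ q ∈ s, q.1 < q.2 := fun q hq => (Finset.mem_filter.mp (hs hq)).2
  obtain ⟨eι⟩ : Nonempty (Fin δ ⊕ Fin (γ - κ) ⊕ s ↪ Fin β) :=
    Function.Embedding.nonempty_of_card_le <| by
      simp only [Fintype.card_sum, Fintype.card_fin, Fintype.card_coe]
      omega
  refine ⟨code s (Fin.castLEEmb hκα) eι, ⟨?_, ?_, ?_⟩, ?_⟩
  · simp only [card_code, Fintype.card_fin, Nat.add_sub_cancel' hκγ]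
  · simp only [card_two_torsion_code, Fintype.card_fin, Nat.add_sub_cancel' hκγ]
  · rw [finrank_span_fst_two_torsion_code, Fintype.card_fin]
  · apply Nat.pow_right_injective le_rfl
    simp only [two_pow_rankOf_code s _ eι hs_lt, Fintype.card_fin, hs_card]
    congr 1
    omega

/-- for every admissible rank `r`, there is a `Z2Z4`-additive code of type
`(α,β;γ,δ;κ)` whose Gray image has rank `r`. -/
theorem exists_code_with_rank (α β γ δ κ r : ℕ)
    (h1 : 0 < α + β) (h2 : 0 < δ + γ) (h3 : δ + γ ≤ β + κ) (h4 : κ ≤ min α γ)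
    (hr1 : γ + 2 * δ ≤ r)
    (hr2 : r ≤ min (β + δ + κ) (γ + 2 * δ + δ * (δ - 1) / 2)) :
    ∃ C : AddSubgroup (Amb α β), IsTypeOf α β γ δ κ C ∧
      rankOf (Phi '' (C : Set (Amb α β))) = r :=
  exists_code_with_rank_general α β γ δ κ r h4 hr1 hr2
end
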